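/- arXiv:2312.12281 — 7 statements merged into one kernel-verified Lean document; each statement's English description precedes it below -/
import Mathlib

section
/- Let Ω be a topological space, p: Ω → ℝ a non-negative measurable function, and μ, ν finite non-negative Borel measures on Ω such that ∫ p dμ < ∞ and ∫ p dν < ∞. Then there exists a continuous, convex, monotone increasing function ξ: ℝ → [1,∞) with superlinear growth (i.e., ξ(t)/t → ∞ as t → ∞) such that ∫ ξ(p) dμ < ∞, ∫ ξ(p) dν < ∞, and ξ(t) ≥ t for all t ≥ 0. -/
/-!
Choose levels `a k → ∞` with `∫ (f - a k)⁺ ≤ 2⁻ᵏ`, which dominated convergence allows.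
The series `∑ₖ (t - a k)⁺` is then a finite, convex function of `t` whose slope is at least `N`
once `t` is past `a 0, …, a (N - 1)`, and its composite with `f` has integral at most `∑ₖ 2⁻ᵏ`.
Adding `1 + log (1 + exp t)` makes it strictly increasing, at least `1` and at least `t`
without spoiling integrability. Two measures are handled at once by working with `μ + ν`.
-/

open MeasureTheory Filter Real Set Topology

noncomputable def softplus (t : ℝ) : ℝ := log (1 + exp t)

lemma hasDerivAt_softplus (t : ℝ) : HasDerivAt softplus (exp t / (1 + exp t)) t :=
  ((hasDerivAt_exp t).const_add 1).log (by positivity)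

lemma deriv_softplus : deriv softplus = fun t => exp t / (1 + exp t) :=
  funext fun t => (hasDerivAt_softplus t).deriv

lemma differentiable_softplus : Differentiable ℝ softplus :=
  fun t => (hasDerivAt_softplus t).differentiableAt

lemma continuous_softplus : Continuous softplus := differentiable_softplus.continuous

lemma strictMono_softplus : StrictMono softplus :=
  strictMono_of_deriv_pos fun t => by rw [deriv_softplus]; positivity

lemma convexOn_softplus : ConvexOn ℝ univ softplus := by
  refine Monotone.convexOn_univ_of_deriv differentiable_softplus ?_
  intro x y hxy
  rw [deriv_softplus, div_le_div_iff₀ (by positivity) (by positivity)]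
  nlinarith [exp_le_exp.2 hxy]

lemma softplus_nonneg (t : ℝ) : 0 ≤ softplus t :=
  log_nonneg (by linarith [exp_pos t])

lemma le_softplus (t : ℝ) : t ≤ softplus t := by
  calc t = log (exp t) := (log_exp t).symm
    _ ≤ softplus t := log_le_log (exp_pos t) (by linarith [exp_pos t])

lemma softplus_le_log_two_add_abs (t : ℝ) : softplus t ≤ log 2 + |t| := by
  have hle : 1 + exp t ≤ 2 * exp |t| := by
    linarith [one_le_exp (abs_nonneg t), exp_le_exp.2 (le_abs_self t)]
  calc softplus t ≤ log (2 * exp |t|) := log_le_log (by positivity) hle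
    _ = log 2 + |t| := by rw [log_mul two_ne_zero (exp_pos _).ne', log_exp]

lemma MeasureTheory.Integrable.softplus_comp {Ω : Type*} [MeasurableSpace Ω] {μ : Measure Ω}
    [IsFiniteMeasure μ] {f : Ω → ℝ} (hf : Integrable f μ) :
    Integrable (fun ω => softplus (f ω)) μ := by
  refine ((integrable_const (log 2)).add hf.abs).mono
    (continuous_softplus.comp_aestronglyMeasurable hf.1) (ae_of_all _ fun ω => ?_)
  have h2 : 0 ≤ log 2 := log_nonneg one_le_two
  rw [norm_of_nonneg (softplus_nonneg _), Pi.add_apply, norm_of_nonneg (by positivity)]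
  exact softplus_le_log_two_add_abs _

lemma ConvexOn.tsum {ι E : Type*} [AddCommGroup E] [Module ℝ E] {s : Set E} {f : ι → E → ℝ}
    (hf : ∀ i, ConvexOn ℝ s (f i)) (hs : Convex ℝ s)
    (hsum : ∀ x ∈ s, Summable fun i => f i x) :
    ConvexOn ℝ s (fun x => ∑' i, f i x) := by
  refine ⟨hs, fun x hx y hy α β hα hβ hαβ => ?_⟩
  have hsx := (hsum x hx).mul_left α
  have hsy := (hsum y hy).mul_left β
  calc ∑' i, f i (α • x + β • y) ≤ ∑' i, (α * f i x + β * f i y) :=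
        (hsum _ (hs hx hy hα hβ hαβ)).tsum_le_tsum
          (fun i => (hf i).2 hx hy hα hβ hαβ) (hsx.add hsy)
    _ = α • ∑' i, f i x + β • ∑' i, f i y := by
        rw [hsx.tsum_add hsy, tsum_mul_left, tsum_mul_left, smul_eq_mul, smul_eq_mul]

theorem integrable_tsum_of_summable_integral_norm {Ω ι E : Type*} [MeasurableSpace Ω]
    {μ : Measure Ω} [Countable ι] [NormedAddCommGroup E] {F : ι → Ω → E}
    (hF : ∀ i, Integrable (F i) μ) (hmeas : AEStronglyMeasurable (fun ω => ∑' i, F i ω) μ)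
    (hsum : Summable fun i => ∫ ω, ‖F i ω‖ ∂μ) :
    Integrable (fun ω => ∑' i, F i ω) μ := by
  refine ⟨hmeas, ?_⟩
  calc ∫⁻ ω, ‖∑' i, F i ω‖ₑ ∂μ ≤ ∫⁻ ω, ∑' i, ‖F i ω‖ₑ ∂μ :=
        lintegral_mono fun ω => enorm_tsum_le_tsum_enorm
    _ = ∑' i, ∫⁻ ω, ‖F i ω‖ₑ ∂μ := lintegral_tsum fun i => (hF i).1.enorm
    _ = ∑' i, ENNReal.ofReal (∫ ω, ‖F i ω‖ ∂μ) := by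
        simp_rw [ofReal_integral_norm_eq_lintegral_enorm (hF _)]
    _ < ⊤ := by
        rw [← ENNReal.ofReal_tsum_of_nonneg (fun i => integral_nonneg fun _ => norm_nonneg _)
          hsum]
        exact ENNReal.ofReal_lt_top

section Tail

variable {Ω : Type*} [MeasurableSpace Ω] {μ : Measure Ω} {f : Ω → ℝ}

lemma tendsto_integral_max_sub_atTop (hf : Integrable f μ) :
    Tendsto (fun c : ℝ => ∫ ω, max (f ω - c) 0 ∂μ) atTop (𝓝 0) := by
  have hlim := tendsto_integral_filter_of_dominated_convergence (μ := μ) (l := atTop)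
    (F := fun (c : ℝ) ω => max (f ω - c) 0) (f := fun _ => 0) (fun ω => ‖f ω‖)
    (Eventually.of_forall fun c =>
      ((continuous_id.sub continuous_const).max continuous_const).comp_aestronglyMeasurable hf.1)
    ?_ hf.norm ?_
  · simpa using hlim
  · filter_upwards [eventually_ge_atTop 0] with c hc
    refine ae_of_all _ fun ω => ?_
    rw [norm_of_nonneg (le_max_right _ _), norm_eq_abs]
    exact max_le (by linarith [le_abs_self (f ω)]) (abs_nonneg _)
  · refine ae_of_all _ fun ω => tendsto_const_nhds.congr' ?_
    filter_upwards [eventually_ge_atTop (f ω)] with c hc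
    exact (max_eq_right (by linarith)).symm

lemma exists_tendsto_atTop_summable_integral_max_sub (hf : Integrable f μ) :
    ∃ a : ℕ → ℝ, Tendsto a atTop atTop ∧
      Summable fun k => ∫ ω, max (f ω - a k) 0 ∂μ := by
  have hlevel : ∀ k : ℕ, ∃ c : ℝ, (k : ℝ) ≤ c ∧ ∫ ω, max (f ω - c) 0 ∂μ ≤ (1 / 2) ^ k :=
    fun k => ((eventually_ge_atTop _).and
      ((tendsto_integral_max_sub_atTop hf).eventually (ge_mem_nhds (by positivity)))).exists
  choose a hka hint using hlevel
  exact ⟨a, tendsto_atTop_mono hka tendsto_natCast_atTop_atTop,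
    summable_geometric_two.of_nonneg_of_le (fun k => integral_nonneg fun _ => le_max_right _ _)
      hint⟩

end Tail

noncomputable def hingeSum (a : ℕ → ℝ) (t : ℝ) : ℝ := ∑' k, max (t - a k) 0

section HingeSum

variable {a : ℕ → ℝ}

lemma summable_max_sub (ha : Tendsto a atTop atTop) (t : ℝ) :
    Summable fun k => max (t - a k) 0 := by
  have hfin : ∀ᶠ k in cofinite, t ≤ a k := by
    rw [Nat.cofinite_eq_atTop]; exact ha.eventually_ge_atTop t
  refine summable_of_hasFiniteSupport (hfin.subset fun k hk htk => hk ?_)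
  exact max_eq_right (by linarith [show t ≤ a k from htk])

lemma hingeSum_nonneg (t : ℝ) : 0 ≤ hingeSum a t :=
  tsum_nonneg fun _ => le_max_right _ _

lemma convexOn_hingeSum (ha : Tendsto a atTop atTop) : ConvexOn ℝ univ (hingeSum a) :=
  ConvexOn.tsum (fun k => ((convexOn_id convex_univ).sub (concaveOn_const (a k) convex_univ)).sup
    (convexOn_const 0 convex_univ)) convex_univ fun t _ => summable_max_sub ha t

lemma continuous_hingeSum (ha : Tendsto a atTop atTop) : Continuous (hingeSum a) :=
  continuousOn_univ.1 ((convexOn_hingeSum ha).continuousOn isOpen_univ)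

lemma monotone_hingeSum (ha : Tendsto a atTop atTop) : Monotone (hingeSum a) :=
  fun _ _ hxy => (summable_max_sub ha _).tsum_le_tsum
    (fun _ => max_le_max (by linarith) le_rfl) (summable_max_sub ha _)

lemma sum_range_sub_le_hingeSum (ha : Tendsto a atTop atTop) (t : ℝ) (N : ℕ) :
    ∑ k ∈ Finset.range N, (t - a k) ≤ hingeSum a t :=
  calc ∑ k ∈ Finset.range N, (t - a k) ≤ ∑ k ∈ Finset.range N, max (t - a k) 0 :=
        Finset.sum_le_sum fun _ _ => le_max_left _ _
    _ ≤ hingeSum a t := (summable_max_sub ha t).sum_le_tsum _ fun _ _ => le_max_right _ _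

lemma tendsto_hingeSum_div_atTop (ha : Tendsto a atTop atTop) :
    Tendsto (fun t => hingeSum a t / t) atTop atTop := by
  refine tendsto_atTop.2 fun C => ?_
  obtain ⟨N, hN⟩ := exists_nat_ge (C + 1)
  filter_upwards [eventually_ge_atTop (max (∑ k ∈ Finset.range N, a k) 1)] with t ht
  have hlow := sum_range_sub_le_hingeSum ha t N
  rw [Finset.sum_sub_distrib, Finset.sum_const, Finset.card_range, nsmul_eq_mul] at hlow
  have ht1 : 1 ≤ t := le_of_max_le_right ht
  have htA : ∑ k ∈ Finset.range N, a k ≤ t := le_of_max_le_left ht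
  have hslope : 0 ≤ ((N : ℝ) - (C + 1)) * t := mul_nonneg (by linarith) (by linarith)
  rw [le_div_iff₀ (by linarith)]
  linarith

lemma MeasureTheory.Integrable.hingeSum_comp {Ω : Type*} [MeasurableSpace Ω] {μ : Measure Ω}
    [IsFiniteMeasure μ] {f : Ω → ℝ} (hf : Integrable f μ) (ha : Tendsto a atTop atTop)
    (hs : Summable fun k => ∫ ω, max (f ω - a k) 0 ∂μ) :
    Integrable (fun ω => hingeSum a (f ω)) μ :=
  integrable_tsum_of_summable_integral_norm
    (fun k => (hf.sub (integrable_const (a k))).pos_part)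
    ((continuous_hingeSum ha).comp_aestronglyMeasurable hf.1)
    (hs.congr fun _ => integral_congr_ae (ae_of_all _ fun _ =>
      (norm_of_nonneg (le_max_right _ _)).symm))

end HingeSum

theorem exists_convexOn_superlinear_integrable_comp {Ω : Type*} [MeasurableSpace Ω]
    {μ : Measure Ω} [IsFiniteMeasure μ] {f : Ω → ℝ} (hf : Integrable f μ) :
    ∃ ξ : ℝ → ℝ, Continuous ξ ∧ ConvexOn ℝ univ ξ ∧ StrictMono ξ ∧ (∀ t, 1 ≤ ξ t) ∧
      (∀ t, t ≤ ξ t) ∧ Tendsto (fun t => ξ t / t) atTop atTop ∧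
      Integrable (fun ω => ξ (f ω)) μ := by
  obtain ⟨a, ha, hs⟩ := exists_tendsto_atTop_summable_integral_max_sub hf
  refine ⟨fun t => 1 + softplus t + hingeSum a t,
    (continuous_const.add continuous_softplus).add (continuous_hingeSum ha),
    ((convexOn_const 1 convex_univ).add convexOn_softplus).add (convexOn_hingeSum ha),
    fun x y hxy => add_lt_add_of_lt_of_le (add_lt_add_right (strictMono_softplus hxy) 1)
      (monotone_hingeSum ha hxy.le),
    fun t => by linarith [softplus_nonneg t, hingeSum_nonneg (a := a) t],
    fun t => by linarith [le_softplus t, hingeSum_nonneg (a := a) t], ?_,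
    ((integrable_const 1).add hf.softplus_comp).add (hf.hingeSum_comp ha hs)⟩
  refine tendsto_atTop_mono' _ ?_ (tendsto_hingeSum_div_atTop ha)
  filter_upwards [eventually_gt_atTop 0] with t ht
  exact div_le_div_of_nonneg_right (by linarith [softplus_nonneg t]) ht.le

theorem dlvp_general {Ω : Type*} [MeasurableSpace Ω]
    (p : Ω → ℝ)
    (μ ν : Measure Ω) [IsFiniteMeasure μ] [IsFiniteMeasure ν]
    (hμ : Integrable p μ) (hν : Integrable p ν) :
    ∃ ξ : ℝ → ℝ, Continuous ξ ∧ ConvexOn ℝ Set.univ ξ ∧ StrictMono ξ ∧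
      (∀ t, 1 ≤ ξ t) ∧
      Tendsto (fun t => ξ t / t) atTop atTop ∧
      Integrable (fun ω => ξ (p ω)) μ ∧ Integrable (fun ω => ξ (p ω)) ν ∧
      (∀ t, 0 ≤ t → t ≤ ξ t) := by
  obtain ⟨ξ, hcont, hconv, hmono, hone, hid, hsuper, hint⟩ :=
    exists_convexOn_superlinear_integrable_comp (hμ.add_measure hν)
  exact ⟨ξ, hcont, hconv, hmono, hone, hsuper, hint.left_of_add_measure,
    hint.right_of_add_measure, fun t _ => hid t⟩

/-- de la Vallée-Poussin theorem. -/
theorem dlvp {Ω : Type*} [MeasurableSpace Ω] [TopologicalSpace Ω]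
    (p : Ω → ℝ) (hpm : Measurable p) (hp0 : ∀ ω, 0 ≤ p ω)
    (μ ν : Measure Ω) [IsFiniteMeasure μ] [IsFiniteMeasure ν]
    (hμ : Integrable p μ) (hν : Integrable p ν) :
    ∃ ξ : ℝ → ℝ, Continuous ξ ∧ ConvexOn ℝ Set.univ ξ ∧ StrictMono ξ ∧
      (∀ t, 1 ≤ ξ t) ∧
      Tendsto (fun t => ξ t / t) atTop atTop ∧
      Integrable (fun ω => ξ (p ω)) μ ∧ Integrable (fun ω => ξ (p ω)) ν ∧
      (∀ t, 0 ≤ t → t ≤ ξ t) :=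
  dlvp_general p μ ν hμ hν
end

section
/- Let 𝒢 be a convex cone of functions on a set Ω containing the constant functions, and let ℋ be the complete lattice cone generated by 𝒢. If p ∈ ℋ and ξ: ℝ → ℝ is convex and non-decreasing, then the composition ξ ∘ p belongs to ℋ. -/
variable {Ω : Type*}

/-- A convex cone of real-valued functions on `Ω`. -/
def IsConvexConeR (𝒢 : Set (Ω → ℝ)) : Prop :=
  ∀ f ∈ 𝒢, ∀ g ∈ 𝒢, ∀ a b : ℝ, 0 ≤ a → 0 ≤ b →
    (fun ω => a * f ω + b * g ω) ∈ 𝒢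

/-- A convex cone of `(-∞,∞]`-valued functions on `Ω`. -/
def IsConvexConeE (C : Set (Ω → EReal)) : Prop :=
  ∀ f ∈ C, ∀ g ∈ C, ∀ a b : ℝ, 0 ≤ a → 0 ≤ b →
    (fun ω => (a : EReal) * f ω + (b : EReal) * g ω) ∈ C

/-- Stability under arbitrary pointwise suprema. -/
def IsSupClosed (C : Set (Ω → EReal)) : Prop :=
  ∀ S : Set (Ω → EReal), S ⊆ C → S.Nonempty → (fun ω => ⨆ f ∈ S, f ω) ∈ C

/-- The complete lattice cone generated by `𝒢`. -/
def completeLatticeConeGen (𝒢 : Set (Ω → ℝ)) : Set (Ω → EReal) :=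
  ⋂₀ {C : Set (Ω → EReal) |
      (∀ g ∈ 𝒢, (fun ω => (g ω : EReal)) ∈ C) ∧ IsConvexConeE C ∧ IsSupClosed C}

/-- If `p` belongs to the complete lattice cone generated by a convex cone `𝒢`
containing the constants, and `ξ : ℝ → ℝ` is convex and non-decreasing, then the
composition `ξ ∘ p` belongs to that complete lattice cone as well. -/
theorem comp_convex_mono_mem (𝒢 : Set (Ω → ℝ)) (hcone : IsConvexConeR 𝒢)
    (hconst : ∀ c : ℝ, (fun _ => c) ∈ 𝒢)
    (p : Ω → ℝ) (hp : (fun ω => (p ω : EReal)) ∈ completeLatticeConeGen 𝒢)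
    (ξ : ℝ → ℝ) (hconv : ConvexOn ℝ Set.univ ξ) (hmono : Monotone ξ) :
    (fun ω => (ξ (p ω) : EReal)) ∈ completeLatticeConeGen 𝒢 := by
  classical
  -- slopes
  set slope : ℝ → ℝ → ℝ := fun s t => (ξ t - ξ s) / (t - s) with hslope
  set α : ℝ → ℝ := fun t => sSup ((fun s => slope s t) '' Set.Iio t) with hα
  have hslope_mono : ∀ s t u : ℝ, s < t → t < u → slope s t ≤ slope t u := by
    intro s t u hst htu
    exact hconv.slope_mono_adjacent (Set.mem_univ s) (Set.mem_univ u) hst htu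
  have hne : ∀ t : ℝ, ((fun s => slope s t) '' Set.Iio t).Nonempty := by
    intro t; exact ⟨slope (t - 1) t, ⟨t - 1, by simp, rfl⟩⟩
  have hbdd : ∀ t : ℝ, BddAbove ((fun s => slope s t) '' Set.Iio t) := by
    intro t
    refine ⟨slope t (t + 1), ?_⟩
    rintro x ⟨s, hs, rfl⟩
    exact hslope_mono s t (t + 1) hs (by linarith)
  -- key support inequality
  have hkey : ∀ t u : ℝ, ξ t + α t * (u - t) ≤ ξ u := by
    intro t u
    rcases lt_trichotomy u t with h | h | h
    · have h1 : slope u t ≤ α t := le_csSup (hbdd t) ⟨u, h, rfl⟩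
      have hne' : t - u ≠ 0 := by linarith
      have h2 : slope u t * (t - u) = ξ t - ξ u := by
        simp only [hslope]; field_simp
      nlinarith [h1, h2, sub_pos.mpr h]
    · simp [h]
    · have h1 : α t ≤ slope t u := by
        apply csSup_le (hne t)
        rintro x ⟨s, hs, rfl⟩
        exact hslope_mono s t u hs h
      have hne' : u - t ≠ 0 := by linarith
      have h2 : slope t u * (u - t) = ξ u - ξ t := by
        simp only [hslope]; field_simp
      nlinarith [h1, h2, sub_pos.mpr h]
  have hαnn : ∀ t : ℝ, 0 ≤ α t := by
    intro t
    have : (0:ℝ) ≤ slope (t - 1) t := by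
      have : ξ (t - 1) ≤ ξ t := hmono (by linarith)
      simp only [hslope]
      apply div_nonneg <;> linarith
    exact this.trans (le_csSup (hbdd t) ⟨t - 1, by simp, rfl⟩)
  -- ℋ itself satisfies the defining predicate
  have hH : (∀ g ∈ 𝒢, (fun ω => (g ω : EReal)) ∈ completeLatticeConeGen 𝒢) ∧
      IsConvexConeE (completeLatticeConeGen 𝒢) ∧ IsSupClosed (completeLatticeConeGen 𝒢) := by
    refine ⟨?_, ?_, ?_⟩
    · intro g hg C hC; exact hC.1 g hg
    · intro f hf g hg a b ha hb C hC
      exact hC.2.1 f (hf C hC) g (hg C hC) a b ha hb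
    · intro S hS hSne C hC
      exact hC.2.2 S (fun f hf => hS hf C hC) hSne
  obtain ⟨hH1, hH2, hH3⟩ := hH
  -- affine images of p are in ℋ
  have haff : ∀ a b : ℝ, 0 ≤ a →
      (fun ω => ((a * p ω + b : ℝ) : EReal)) ∈ completeLatticeConeGen 𝒢 := by
    intro a b ha
    have := hH2 _ hp _ (hH1 _ (hconst b)) a 1 ha zero_le_one
    convert this using 2 with ω
    push_cast
    rw [one_mul]
  -- the family of affine minorants
  set F : ℝ → Ω → EReal := fun t ω => ((α t * p ω + (ξ t - α t * t) : ℝ) : EReal) with hF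
  have hmem := hH3 (Set.range F) (by rintro f ⟨t, rfl⟩; exact haff (α t) _ (hαnn t)) ⟨F 0, 0, rfl⟩
  convert hmem using 1
  funext ω
  rw [iSup_range]
  apply le_antisymm
  · have : (ξ (p ω) : EReal) = F (p ω) ω := by
      simp only [hF]; norm_cast; ring
    rw [this]
    exact le_iSup (fun t => F t ω) (p ω)
  · apply iSup_le
    intro t
    simp only [hF, EReal.coe_le_coe_iff]
    have := hkey t (p ω)
    linarith
end

section
/- Let μ be a finite Radon measure on a topological space Ω and let (f_α)_{α∈A} be an increasing net of lower semi-continuous functions on Ω converging pointwise to f. Assume that f_{α_0} is μ-integrable for some α_0 ∈ A and that f is μ-integrable. Then lim_α ∫_Ω f_α dμ = ∫_Ω f dμ. -/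
/-!
The limit `g` is the supremum of the `f α`, hence lower semicontinuous and measurable. Cut `Ω`
into the slabs `δk < g ≤ δ(k+1)`. On each slab the open sets `{f α > δk}` increase and exhaust
it, so by inner regularity and compactness the part of the slab they miss has measure tending
to `0`; off that part `g - f α < δ`. Summing over the slabs, `f α → g` in measure, and since
`0 ≤ g - f α ≤ g - f α₀` for `α ≥ α₀`, absolute continuity of the integral of `g - f α₀` turns
this into convergence of the integrals, along the net itself rather than a sequence.
-/

open MeasureTheory Filter Set
open scoped Topology ENNReal

theorem ENNReal.tendsto_tsum_zero_of_dominated {ι β : Type*} {l : Filter ι} {f : ι → β → ℝ≥0∞}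
    {b : β → ℝ≥0∞} (hb : ∑' k, b k ≠ ∞) (hfb : ∀ i k, f i k ≤ b k)
    (hf : ∀ k, Tendsto (f · k) l (𝓝 0)) :
    Tendsto (fun i => ∑' k, f i k) l (𝓝 0) := by
  have hf_ne_top : ∀ i k, f i k ≠ ∞ := fun i k =>
    ne_top_of_le_ne_top (ENNReal.ne_top_of_tsum_ne_top hb k) (hfb i k)
  have hreal : Tendsto (fun i => ∑' k, (f i k).toReal) l (𝓝 0) := by
    simpa using tendsto_tsum_of_dominated_convergence (ENNReal.summable_toReal hb)
      (fun k => (ENNReal.tendsto_toReal ENNReal.zero_ne_top).comp (hf k))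
      (Eventually.of_forall fun i k => by
        simpa using ENNReal.toReal_mono (ENNReal.ne_top_of_tsum_ne_top hb k) (hfb i k))
  rw [← ENNReal.tendsto_toReal_iff
    (fun i => ne_top_of_le_ne_top hb (ENNReal.tsum_le_tsum (hfb i))) ENNReal.zero_ne_top]
  simpa [ENNReal.tsum_toReal_eq (hf_ne_top _)] using hreal

theorem le_of_monotone_of_tendsto {Ω A : Type*} [Preorder A] [IsDirected A (· ≤ ·)]
    {f : A → Ω → ℝ} (hf : Monotone f) {g : Ω → ℝ}
    (hfg : ∀ ω, Tendsto (f · ω) atTop (𝓝 (g ω))) (α : A) : f α ≤ g :=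
  fun ω => Monotone.ge_of_tendsto (fun _ _ h => hf h ω) (hfg ω) α

/-- Dominated convergence in measure: unlike `tendsto_integral_filter_of_dominated_convergence`,
this holds along any filter. -/
theorem tendsto_integral_of_tendsto_measure_le {Ω ι : Type*} [MeasurableSpace Ω]
    {μ : Measure Ω} [IsFiniteMeasure μ] {l : Filter ι} {h : ι → Ω → ℝ} {H : Ω → ℝ}
    (hH : Integrable H μ) (hh : ∀ i, Measurable (h i)) (hh_nonneg : ∀ i, 0 ≤ h i)
    (hh_le : ∀ᶠ i in l, h i ≤ H)
    (hh_small : ∀ δ > 0, Tendsto (fun i => μ {ω | δ ≤ h i ω}) l (𝓝 0)) :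
    Tendsto (fun i => ∫ ω, h i ω ∂μ) l (𝓝 0) := by
  have hbound : ∀ δ > 0, ∀ᶠ i in l,
      ∫ ω, h i ω ∂μ ≤ δ * μ.real univ + ∫ ω in {ω | δ ≤ h i ω}, H ω ∂μ := by
    intro δ hδ
    filter_upwards [hh_le] with i hi
    have hB : MeasurableSet {ω | δ ≤ h i ω} := measurableSet_le measurable_const (hh i)
    have hpt : h i ≤ fun ω => δ + {ω | δ ≤ h i ω}.indicator H ω := fun ω => by
      change h i ω ≤ δ + _
      by_cases hω : ω ∈ {ω | δ ≤ h i ω}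
      · rw [indicator_of_mem hω]
        linarith [hi ω]
      · rw [indicator_of_notMem hω, add_zero]
        exact (not_le.1 hω).le
    have hhi : Integrable (h i) μ := hH.mono' (hh i).aestronglyMeasurable
      (ae_of_all _ fun ω => by simpa [abs_of_nonneg (hh_nonneg i ω)] using hi ω)
    calc ∫ ω, h i ω ∂μ ≤ ∫ ω, δ + {ω | δ ≤ h i ω}.indicator H ω ∂μ :=
          integral_mono hhi ((integrable_const δ).add (hH.indicator hB)) hpt
      _ = δ * μ.real univ + ∫ ω in {ω | δ ≤ h i ω}, H ω ∂μ := by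
        rw [integral_add (integrable_const δ) (hH.indicator hB), integral_const,
          integral_indicator hB, smul_eq_mul, mul_comm]
  rw [Metric.tendsto_nhds]
  intro ε hε
  obtain ⟨δ, hδ, hδε⟩ := exists_pos_mul_lt (half_pos hε) (μ.real univ)
  filter_upwards [hbound δ hδ, (tendsto_order.1 (hH.tendsto_setIntegral_nhds_zero
    (hh_small δ hδ))).2 _ (half_pos hε)] with i hi hHi
  rw [Real.dist_eq, sub_zero, abs_of_nonneg (integral_nonneg (hh_nonneg i))]
  linarith

section

variable {Ω : Type*} [TopologicalSpace Ω] {A : Type*} [Preorder A] [IsDirected A (· ≤ ·)]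
  [Nonempty A]

theorem tendsto_measure_diff_of_monotone_isOpen [MeasurableSpace Ω]
    [OpensMeasurableSpace Ω] {μ : Measure Ω} [μ.InnerRegularCompactLTTop] {U : A → Set Ω}
    (hU : Monotone U) (hU_open : ∀ α, IsOpen (U α)) {s : Set Ω} (hs : MeasurableSet s)
    (hμs : μ s ≠ ∞) (hsU : s ⊆ ⋃ α, U α) :
    Tendsto (fun α => μ (s \ U α)) atTop (𝓝 0) := by
  refine ENNReal.tendsto_nhds_zero.2 fun ε hε => ?_
  obtain ⟨K, hKs, hK, hμK⟩ := hs.exists_isCompact_lt_add hμs hε.ne'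
  obtain ⟨α₀, hKα₀⟩ := hK.elim_directed_cover U hU_open (hKs.trans hsU) hU.directed_le
  filter_upwards [eventually_ge_atTop α₀] with α hα
  rw [← sdiff_self_inter]
  refine (measure_sdiff_lt_of_lt_add (hs.inter (hU_open α).measurableSet).nullMeasurableSet
    inter_subset_left (measure_ne_top_of_subset inter_subset_left hμs) ?_).le
  calc μ s < μ K + ε := hμK
    _ ≤ μ (s ∩ U α) + ε := by gcongr; exact subset_inter hKs (hKα₀.trans (hU hα))

theorem lowerSemicontinuous_of_monotone_of_tendsto {f : A → Ω → ℝ} (hf : Monotone f)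
    (hf_lsc : ∀ α, LowerSemicontinuous (f α)) {g : Ω → ℝ}
    (hfg : ∀ ω, Tendsto (f · ω) atTop (𝓝 (g ω))) : LowerSemicontinuous g := by
  refine lowerSemicontinuous_iff_isOpen_preimage.2 fun t => ?_
  have : g ⁻¹' Ioi t = ⋃ α, f α ⁻¹' Ioi t := by
    ext ω
    refine ⟨fun h => mem_iUnion.2 ((hfg ω).eventually (Ioi_mem_nhds h)).exists, fun h => ?_⟩
    obtain ⟨α, hα⟩ := mem_iUnion.1 h
    exact lt_of_lt_of_le hα (le_of_monotone_of_tendsto hf hfg α ω)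
  rw [this]
  exact isOpen_iUnion fun α => (hf_lsc α).isOpen_preimage t

theorem tendsto_measure_le_sub_of_monotone_of_tendsto [MeasurableSpace Ω]
    [OpensMeasurableSpace Ω] {μ : Measure Ω} [μ.InnerRegularCompactLTTop] [IsFiniteMeasure μ]
    {f : A → Ω → ℝ} (hf : Monotone f)
    (hf_lsc : ∀ α, LowerSemicontinuous (f α)) {g : Ω → ℝ} (hg : Measurable g)
    (hfg : ∀ ω, Tendsto (f · ω) atTop (𝓝 (g ω))) {δ : ℝ} (hδ : 0 < δ) :
    Tendsto (fun α => μ {ω | δ ≤ g ω - f α ω}) atTop (𝓝 0) := by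
  -- On `S k`, leaving the bad set only requires `f α > k • δ`, an open condition.
  let S : ℤ → Set Ω := fun k => g ⁻¹' Ioc (k • δ) ((k + 1) • δ)
  let U : A → ℤ → Set Ω := fun α k => f α ⁻¹' Ioi (k • δ)
  have hS : ∀ k, MeasurableSet (S k) := fun k => hg measurableSet_Ioc
  have hS_sum : ∑' k, μ (S k) ≠ ∞ := by
    rw [← measure_iUnion ((pairwise_disjoint_Ioc_zsmul δ).mono fun _ _ h => h.preimage g) hS]
    exact measure_ne_top μ _
  have hbad : ∀ α, {ω | δ ≤ g ω - f α ω} ⊆ ⋃ k, S k \ U α k := by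
    intro α ω hω
    obtain ⟨k, hk⟩ := mem_iUnion.1 ((iUnion_Ioc_zsmul hδ).symm ▸ mem_univ (g ω))
    refine mem_iUnion.2 ⟨k, hk, fun hU => ?_⟩
    have : g ω ≤ k • δ + δ := by simpa [add_smul] using hk.2
    have : k • δ < f α ω := hU
    simp only [mem_ofPred_eq] at hω
    linarith
  have hslab : ∀ k, Tendsto (fun α => μ (S k \ U α k)) atTop (𝓝 0) := by
    refine fun k => tendsto_measure_diff_of_monotone_isOpen (U := (U · k))
      (fun _ _ h _ hω => lt_of_lt_of_le hω (hf h _)) (fun α => (hf_lsc α).isOpen_preimage _)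
      (hS k) (measure_ne_top μ _) fun ω hω => ?_
    obtain ⟨α, hα⟩ := ((hfg ω).eventually (Ioi_mem_nhds hω.1)).exists
    exact mem_iUnion.2 ⟨α, hα⟩
  refine tendsto_of_tendsto_of_tendsto_of_le_of_le tendsto_const_nhds
    (ENNReal.tendsto_tsum_zero_of_dominated hS_sum (fun α k => measure_mono sdiff_subset) hslab)
    (fun _ => zero_le) fun α => (measure_mono (hbad α)).trans (measure_iUnion_le _)

end

/-- Monotone convergence along a net of lower semi-continuous functions for a finite
Radon (inner regular) measure. -/
theorem tendsto_integral_of_monotone_net {Ω : Type*} [TopologicalSpace Ω]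
    [MeasurableSpace Ω] [BorelSpace Ω]
    (μ : Measure Ω) [IsFiniteMeasure μ] [μ.InnerRegular]
    {A : Type*} [Preorder A] [Nonempty A] [IsDirected A (· ≤ ·)]
    (f : A → Ω → ℝ) (hmono : Monotone f)
    (hlsc : ∀ α, LowerSemicontinuous (f α))
    (g : Ω → ℝ) (hconv : ∀ ω, Tendsto (fun α => f α ω) atTop (nhds (g ω)))
    (α₀ : A) (hint₀ : Integrable (f α₀) μ) (hintg : Integrable g μ) :
    Tendsto (fun α => ∫ ω, f α ω ∂μ) atTop (nhds (∫ ω, g ω ∂μ)) := by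
  have hle := le_of_monotone_of_tendsto hmono hconv
  have hg : Measurable g :=
    (lowerSemicontinuous_of_monotone_of_tendsto hmono hlsc hconv).measurable
  have hgap : Tendsto (fun α => ∫ ω, (g ω - f α ω) ∂μ) atTop (𝓝 0) :=
    tendsto_integral_of_tendsto_measure_le (hintg.sub hint₀)
      (fun α => hg.sub (hlsc α).measurable) (fun α ω => sub_nonneg.2 (hle α ω))
      ((eventually_ge_atTop α₀).mono fun α hα ω => sub_le_sub_left (hmono hα ω) _)
      fun δ hδ => tendsto_measure_le_sub_of_monotone_of_tendsto hmono hlsc hg hconv hδ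
  have hint : ∀ᶠ α in atTop, Integrable (f α) μ := (eventually_ge_atTop α₀).mono fun α hα =>
    integrable_of_le_of_le (hlsc α).measurable.aestronglyMeasurable (ae_of_all _ (hmono hα))
      (ae_of_all _ (hle α)) hint₀ hintg
  refine (by simpa using tendsto_const_nhds.sub hgap :
    Tendsto (fun α => ∫ ω, g ω ∂μ - ∫ ω, (g ω - f α ω) ∂μ) atTop (𝓝 (∫ ω, g ω ∂μ))).congr' ?_
  filter_upwards [hint] with α hα
  rw [integral_sub hintg hα]
  ring
end

section
/- Let ℋ be the complete lattice cone of functions on a topological space Ω generated by a convex cone 𝒢. Then for every subset S ⊆ Ω, the closed ℋ-convex hull clConv_ℋ(S) = {ω ∈ Ω : f(ω) ≤ sup f(S) for all f ∈ ℋ} is equal to {ω ∈ Ω : g(ω) ≤ sup g(S) for all g ∈ 𝒢}. -/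
variable {Ω : Type*}

private lemma EReal.mul_iSup' {ι : Sort*} [Nonempty ι] {a : ℝ} (ha : 0 ≤ a) (x : ι → EReal) :
    (a : EReal) * ⨆ i, x i = ⨆ i, (a : EReal) * x i := by
  rcases ha.eq_or_lt with rfl | ha
  · simp
  have ha' : (0 : EReal) < (a : EReal) := by exact_mod_cast ha
  refine le_antisymm ?_ (iSup_le fun i => mul_le_mul_of_nonneg_left (le_iSup x i) ha'.le)
  rw [EReal.mul_comm, ← EReal.le_div_iff_mul_le ha' (EReal.coe_ne_top a)]
  refine iSup_le fun i => ?_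
  rw [EReal.le_div_iff_mul_le ha' (EReal.coe_ne_top a), EReal.mul_comm]
  exact le_iSup (fun i => (a : EReal) * x i) i

private lemma EReal.iSup_add_iSup_le' {ι κ : Type*} (x : ι → EReal) (y : κ → EReal) :
    (⨆ i, x i) + ⨆ j, y j ≤ ⨆ p : ι × κ, (x p.1 + y p.2) := by
  refine EReal.add_le_of_forall_lt fun a' ha' b' hb' => ?_
  obtain ⟨i, hi⟩ := lt_iSup_iff.1 ha'
  obtain ⟨j, hj⟩ := lt_iSup_iff.1 hb'
  exact (add_le_add hi.le hj.le).trans (le_iSup (fun p : ι × κ => x p.1 + y p.2) (i, j))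


/-- The closed convex hull of `S` with respect to the complete lattice cone `ℋ`
generated by a convex cone `𝒢` coincides with the hull computed using only the
generators in `𝒢`. -/
theorem clConv_completeLatticeCone_eq (𝒢 : Set (Ω → ℝ)) (hcone : IsConvexConeR 𝒢)
    (S : Set Ω) :
    {ω : Ω | ∀ f ∈ completeLatticeConeGen 𝒢, f ω ≤ ⨆ s ∈ S, f s} =
      {ω : Ω | ∀ g ∈ 𝒢, (g ω : EReal) ≤ ⨆ s ∈ S, (g s : EReal)} := by
  -- the set of nonempty suprema of generators
  set D : Set (Ω → EReal) :=
    {f | ∃ T : Set (Ω → ℝ), T ⊆ 𝒢 ∧ T.Nonempty ∧ f = fun ω => ⨆ g ∈ T, (g ω : EReal)} with hD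
  have hDgen : ∀ g ∈ 𝒢, (fun ω => (g ω : EReal)) ∈ D := by
    intro g hg
    exact ⟨{g}, by simpa using hg, Set.singleton_nonempty g, by
      funext ω; simp⟩
  have hDcone : IsConvexConeE D := by
    rintro f ⟨T₁, hT₁, hT₁n, rfl⟩ f' ⟨T₂, hT₂, hT₂n, rfl⟩ a b ha hb
    refine ⟨{h | ∃ g₁ ∈ T₁, ∃ g₂ ∈ T₂, h = fun ω => a * g₁ ω + b * g₂ ω}, ?_, ?_, ?_⟩
    · rintro h ⟨g₁, hg₁, g₂, hg₂, rfl⟩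
      exact hcone g₁ (hT₁ hg₁) g₂ (hT₂ hg₂) a b ha hb
    · obtain ⟨g₁, hg₁⟩ := hT₁n; obtain ⟨g₂, hg₂⟩ := hT₂n
      exact ⟨_, g₁, hg₁, g₂, hg₂, rfl⟩
    · funext ω
      have n₁ : Nonempty T₁ := hT₁n.to_subtype
      have n₂ : Nonempty T₂ := hT₂n.to_subtype
      beta_reduce
      rw [← iSup_subtype'' T₁ (fun g => (g ω : EReal)), ← iSup_subtype'' T₂ (fun g => (g ω : EReal)),
        EReal.mul_iSup' ha, EReal.mul_iSup' hb]
      apply le_antisymm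
      · refine (EReal.iSup_add_iSup_le' _ _).trans (iSup_le fun p => ?_)
        have hm : (fun ω' => a * (p.1 : Ω → ℝ) ω' + b * (p.2 : Ω → ℝ) ω') ∈
            {h | ∃ g₁ ∈ T₁, ∃ g₂ ∈ T₂, h = fun ω => a * g₁ ω + b * g₂ ω} :=
          ⟨p.1, p.1.2, p.2, p.2.2, rfl⟩
        have h2 := le_iSup₂ (f := fun h (_ : h ∈ {h | ∃ g₁ ∈ T₁, ∃ g₂ ∈ T₂,
            h = fun ω => a * g₁ ω + b * g₂ ω}) => (h ω : EReal)) _ hm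
        refine le_trans (le_of_eq ?_) h2
        show _ = ((a * (p.1 : Ω → ℝ) ω + b * (p.2 : Ω → ℝ) ω : ℝ) : EReal)
        push_cast
        ring_nf
      · refine iSup₂_le fun h hh => ?_
        obtain ⟨g₁, hg₁, g₂, hg₂, rfl⟩ := hh
        have : (((a * g₁ ω + b * g₂ ω : ℝ)) : EReal)
            = (a : EReal) * (g₁ ω : EReal) + (b : EReal) * (g₂ ω : EReal) := by push_cast; ring_nf
        rw [this]
        exact add_le_add
          (le_iSup (fun g : T₁ => (a : EReal) * ((g : Ω → ℝ) ω : EReal)) ⟨g₁, hg₁⟩)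
          (le_iSup (fun g : T₂ => (b : EReal) * ((g : Ω → ℝ) ω : EReal)) ⟨g₂, hg₂⟩)
  have hDsup : IsSupClosed D := by
    intro 𝒮 h𝒮 h𝒮n
    choose T hTsub hTn hTf using fun f (hf : f ∈ 𝒮) => h𝒮 hf
    refine ⟨⋃ f ∈ 𝒮, T f ‹_›, ?_, ?_, ?_⟩
    · exact Set.iUnion₂_subset fun f hf => hTsub f hf
    · obtain ⟨f, hf⟩ := h𝒮n
      obtain ⟨g, hg⟩ := hTn f hf
      exact ⟨g, Set.mem_iUnion₂.2 ⟨f, hf, hg⟩⟩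
    · funext ω
      apply le_antisymm
      · refine iSup₂_le fun f hf => ?_
        rw [hTf f hf]
        refine iSup₂_le fun g hg => ?_
        exact le_iSup₂ (f := fun g (_ : g ∈ _) => (g ω : EReal)) g (Set.mem_iUnion₂.2 ⟨f, hf, hg⟩)
      · refine iSup₂_le fun g hg => ?_
        obtain ⟨f, hf, hgf⟩ := Set.mem_iUnion₂.1 hg
        refine le_trans ?_ (le_iSup₂ (f := fun f (_ : f ∈ 𝒮) => f ω) f hf)
        rw [hTf f hf]
        exact le_iSup₂ (f := fun g (_ : g ∈ _) => (g ω : EReal)) g hgf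
  have hsub : completeLatticeConeGen 𝒢 ⊆ D :=
    Set.sInter_subset_of_mem ⟨hDgen, hDcone, hDsup⟩
  ext ω
  simp only [Set.mem_setOf_eq]
  constructor
  · intro h g hg
    exact h _ (fun C hC => hC.1 g hg)
  · intro h f hf
    obtain ⟨T, hT, hTn, rfl⟩ := hsub hf
    refine iSup₂_le fun g hg => ?_
    refine (h g (hT hg)).trans ?_
    refine iSup₂_mono fun s _ => ?_
    exact le_iSup₂ (f := fun g (_ : g ∈ T) => (g s : EReal)) g hg
end

section
/- Let 𝒜 be a linear space of continuous functions on a topological space Ω containing the constants, and let Φ: Ω → 𝒜* be the evaluation map Φ(ω)(a) = a(ω). For S ⊆ Ω, let K = clConv_H(Φ(S)) be the intersection of all closed half-spaces containing Φ(S) determined by weak* continuous affine functionals (equivalently, K = {a* ∈ 𝒜* : a*(a) ≤ sup a(S) for all a ∈ 𝒜}). Then K = {a* ∈ 𝒜* : a*(1) = 1 and a*(a) ≥ 0 for all a ∈ 𝒜 non-negative on S}. -/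
/-- Two descriptions of the weak* closed convex hull `clConv_H Φ(S)` of the image of
`S` under the evaluation (Gelfand) map inside the dual of a normed space `A` of
functions on `Ω` containing the constants.  Here `δ : A →ₗ (Ω → ℝ)` interprets elements
of `A` as functions on `Ω`, and `one : A` is the constant function `1`.  A functional
`φ ∈ A*` satisfies `φ a ≤ sup a(S)` for every `a` if and only if `φ(1) = 1` and
`φ a ≥ 0` for every `a` non-negative on `S`. -/
theorem clConvHull_eq_positives {Ω A : Type*} [NormedAddCommGroup A] [NormedSpace ℝ A]
    (δ : A →ₗ[ℝ] (Ω → ℝ)) (one : A) (hone : δ one = fun _ => (1 : ℝ)) (S : Set Ω) :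
    {φ : A →L[ℝ] ℝ | ∀ a : A, ∀ M : ℝ, (∀ s ∈ S, δ a s ≤ M) → φ a ≤ M} =
      {φ : A →L[ℝ] ℝ | φ one = 1 ∧ ∀ a : A, (∀ s ∈ S, 0 ≤ δ a s) → 0 ≤ φ a} := by
  ext φ
  simp only [Set.mem_setOf_eq]
  constructor
  · intro h
    constructor
    · have h1 : φ one ≤ 1 := h one 1 (by intro s _; rw [hone])
      have h2 : φ (-one) ≤ -1 := by
        apply h (-one) (-1)
        intro s _
        simp [hone]
      rw [map_neg] at h2
      linarith
    · intro a ha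
      have : φ (-a) ≤ 0 := by
        apply h (-a) 0
        intro s hs
        have := ha s hs
        simp only [map_neg, Pi.neg_apply]
        linarith
      rw [map_neg] at this
      linarith
  · rintro ⟨h1, hpos⟩ a M hM
    have : 0 ≤ φ (M • one - a) := by
      apply hpos
      intro s hs
      have := hM s hs
      simp only [map_sub, map_smul, Pi.sub_apply, Pi.smul_apply, hone, smul_eq_mul,
        mul_one]
      linarith
    rw [map_sub, map_smul] at this
    simp only [smul_eq_mul, h1, mul_one] at this
    linarith
end

section
/- Let 𝒜 be a linear subspace of continuous functions on a topological space Ω containing the constants, S ⊆ Ω, and K = {a* ∈ 𝒜* : a*(1) = 1, a*(a) ≥ 0 for all a ∈ 𝒜 non-negative on S}. Let a* ∈ K. Then b* ∈ K belongs to the Gleason part of a* in K (i.e., a* and b* lie on a common open line segment contained in K) if and only if there exist constants C > c > 0 such that c·a*(a) ≤ b*(a) ≤ C·a*(a) for every a ∈ 𝒜 that is non-negative on S. -/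
/-!
Both sides say that the segment from `φ` to `ψ` can be prolonged a little beyond each end
inside `K`. For the state space `K`, the point `(1 + ε) • ψ - ε • φ` beyond `ψ` lies in `K`
exactly when `ε * φ ≤ (1 + ε) * ψ` on non-negative functions, which is the lower Harnack
inequality with `c = ε / (1 + ε)`; prolonging beyond `φ` gives the upper one with
`C = (1 + ε) / ε`.
-/

/-- The Gleason relation on a convex set `K`: two points are related if some open line
segment contained in `K` contains both of them. -/
def gleasonRel {V : Type*} [AddCommGroup V] [Module ℝ V] (K : Set V) (k₁ k₂ : V) : Prop :=
  ∃ l₁ l₂ : V, openSegment ℝ l₁ l₂ ⊆ K ∧ k₁ ∈ openSegment ℝ l₁ l₂ ∧ k₂ ∈ openSegment ℝ l₁ l₂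

open Set Filter Topology

lemma eventually_add_mul_mem_Ioo {s : ℝ} (hs : s ∈ Ioo (0 : ℝ) 1) (d : ℝ) :
    ∀ᶠ ε in 𝓝 (0 : ℝ), s + ε * d ∈ Ioo (0 : ℝ) 1 := by
  have h : Tendsto (fun ε : ℝ => s + ε * d) (𝓝 0) (𝓝 s) :=
    (by fun_prop : Continuous fun ε : ℝ => s + ε * d).tendsto' 0 s (by simp)
  exact h.eventually (isOpen_Ioo.mem_nhds hs)

section Segment

variable {V : Type*} [AddCommGroup V] [Module ℝ V]

lemma gleasonRel.exists_prolongation {K : Set V} {x y : V} (h : gleasonRel K x y) :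
    ∃ ε : ℝ, 0 < ε ∧ (1 + ε) • x - ε • y ∈ K ∧ (1 + ε) • y - ε • x ∈ K := by
  obtain ⟨l₁, l₂, hsub, hx, hy⟩ := h
  rw [openSegment_eq_image_lineMap] at hsub hx hy
  obtain ⟨s, hs, rfl⟩ := hx
  obtain ⟨t, ht, rfl⟩ := hy
  have prolong : ∀ ε u v : ℝ, (1 + ε) • AffineMap.lineMap l₁ l₂ u - ε • AffineMap.lineMap l₁ l₂ v
      = AffineMap.lineMap l₁ l₂ (u + ε * (u - v)) := by
    intro ε u v
    simp only [AffineMap.lineMap_apply_module]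
    module
  have hsmall : ∀ᶠ ε in 𝓝[>] (0 : ℝ), s + ε * (s - t) ∈ Ioo 0 1 ∧ t + ε * (t - s) ∈ Ioo 0 1 :=
    ((eventually_add_mul_mem_Ioo hs _).and (eventually_add_mul_mem_Ioo ht _)).filter_mono
      nhdsWithin_le_nhds
  obtain ⟨ε, ⟨hεs, hεt⟩, hε⟩ := (hsmall.and self_mem_nhdsWithin).exists
  exact ⟨ε, hε, prolong ε s t ▸ hsub (mem_image_of_mem _ hεs),
    prolong ε t s ▸ hsub (mem_image_of_mem _ hεt)⟩

lemma gleasonRel_of_prolongation {K : Set V} (hK : Convex ℝ K) {x y : V} {ε : ℝ} (hε : 0 < ε)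
    (hx : (1 + ε) • x - ε • y ∈ K) (hy : (1 + ε) • y - ε • x ∈ K) : gleasonRel K x y := by
  refine ⟨_, _, hK.openSegment_subset hx hy,
    ⟨(1 + ε) / (1 + 2 * ε), ε / (1 + 2 * ε), by positivity, by positivity, ?_, ?_⟩,
    ⟨ε / (1 + 2 * ε), (1 + ε) / (1 + 2 * ε), by positivity, by positivity, ?_, ?_⟩⟩
  · field_simp; ring
  · match_scalars <;> field_simp <;> ring
  · field_simp; ring
  · match_scalars <;> field_simp <;> ring

lemma gleasonRel_iff_exists_prolongation {K : Set V} (hK : Convex ℝ K) {x y : V} :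
    gleasonRel K x y ↔
      ∃ ε : ℝ, 0 < ε ∧ (1 + ε) • x - ε • y ∈ K ∧ (1 + ε) • y - ε • x ∈ K :=
  ⟨gleasonRel.exists_prolongation, fun ⟨_, hε, hx, hy⟩ => gleasonRel_of_prolongation hK hε hx hy⟩

end Segment

section StateSpace

variable {A : Type*} [AddCommGroup A] [Module ℝ A] [TopologicalSpace A]

def stateSpace (one : A) (P : Set A) : Set (A →L[ℝ] ℝ) :=
  {χ | χ one = 1 ∧ ∀ a ∈ P, 0 ≤ χ a}

lemma convex_stateSpace (one : A) (P : Set A) : Convex ℝ (stateSpace one P) := by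
  rintro χ ⟨hχ₁, hχ⟩ ξ ⟨hξ₁, hξ⟩ s t hs ht hst
  refine ⟨?_, fun a ha => ?_⟩
  · simp [hχ₁, hξ₁, hst]
  · have := hχ a ha
    have := hξ a ha
    simp only [add_apply, smul_apply, smul_eq_mul]
    positivity

lemma prolongation_mem_stateSpace_iff {one : A} {P : Set A} {φ ψ : A →L[ℝ] ℝ}
    (hφ : φ one = 1) (hψ : ψ one = 1) (ε : ℝ) :
    (1 + ε) • ψ - ε • φ ∈ stateSpace one P ↔ ∀ a ∈ P, ε * φ a ≤ (1 + ε) * ψ a := by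
  simp [stateSpace, hφ, hψ]

end StateSpace

lemma exists_prolongation_iff_harnack {ι : Type*} {P : Set ι} {f g : ι → ℝ}
    (hf : ∀ i ∈ P, 0 ≤ f i) :
    (∃ ε : ℝ, 0 < ε ∧ (∀ i ∈ P, ε * g i ≤ (1 + ε) * f i) ∧ ∀ i ∈ P, ε * f i ≤ (1 + ε) * g i) ↔
      ∃ c C : ℝ, 0 < c ∧ c < C ∧ ∀ i ∈ P, c * f i ≤ g i ∧ g i ≤ C * f i := by
  constructor
  · rintro ⟨ε, hε, hupper, hlower⟩
    refine ⟨ε / (1 + ε), (1 + ε) / ε, by positivity, ?_, fun i hi => ⟨?_, ?_⟩⟩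
    · calc ε / (1 + ε) < 1 := (div_lt_one (by positivity)).2 (by linarith)
        _ < (1 + ε) / ε := (one_lt_div hε).2 (by linarith)
    · rw [div_mul_eq_mul_div, div_le_iff₀ (by positivity), mul_comm (g i)]
      exact hlower i hi
    · rw [div_mul_eq_mul_div, le_div_iff₀ hε, mul_comm (g i)]
      exact hupper i hi
  · rintro ⟨c, C, hc, hcC, hharnack⟩
    set ε := min c C⁻¹
    have hC : 0 < C := hc.trans hcC
    have hε : 0 < ε := lt_min hc (inv_pos.2 hC)
    have hεC : ε * C ≤ 1 :=
      (mul_le_mul_of_nonneg_right (min_le_right _ _) hC.le).trans (inv_mul_cancel₀ hC.ne').le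
    refine ⟨ε, hε, fun i hi => ?_, fun i hi => ?_⟩
    · calc ε * g i ≤ ε * (C * f i) := mul_le_mul_of_nonneg_left (hharnack i hi).2 hε.le
        _ = (ε * C) * f i := by ring
        _ ≤ 1 * f i := mul_le_mul_of_nonneg_right hεC (hf i hi)
        _ ≤ (1 + ε) * f i := mul_le_mul_of_nonneg_right (by linarith) (hf i hi)
    · have hcg := (hharnack i hi).1
      calc ε * f i ≤ c * f i := mul_le_mul_of_nonneg_right (min_le_left _ _) (hf i hi)
        _ ≤ g i := hcg
        _ ≤ (1 + ε) * g i :=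
          le_mul_of_one_le_left ((mul_nonneg hc.le (hf i hi)).trans hcg) (by linarith)

theorem gleasonPart_iff_harnack_general {Ω A : Type*} [NormedAddCommGroup A] [NormedSpace ℝ A]
    (δ : A →ₗ[ℝ] (Ω → ℝ)) (one : A) (S : Set Ω)
    (K : Set (A →L[ℝ] ℝ))
    (hK : K = {χ : A →L[ℝ] ℝ | χ one = 1 ∧ ∀ a : A, (∀ s ∈ S, 0 ≤ δ a s) → 0 ≤ χ a})
    (φ ψ : A →L[ℝ] ℝ) (hφ : φ ∈ K) (hψ : ψ ∈ K) :
    gleasonRel K φ ψ ↔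
      ∃ c C : ℝ, 0 < c ∧ c < C ∧
        ∀ a : A, (∀ s ∈ S, 0 ≤ δ a s) → c * φ a ≤ ψ a ∧ ψ a ≤ C * φ a := by
  change K = stateSpace one {a | ∀ s ∈ S, 0 ≤ δ a s} at hK
  subst hK
  rw [gleasonRel_iff_exists_prolongation (convex_stateSpace _ _)]
  simp only [prolongation_mem_stateSpace_iff hφ.1 hψ.1, prolongation_mem_stateSpace_iff hψ.1 hφ.1]
  exact exists_prolongation_iff_harnack hφ.2

/-- Harnack-inequality characterisation of Gleason parts.  Let `A` be a normed space of
functions on `Ω` (via the interpretation map `δ`) containing the constant function `one`,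
let `S ⊆ Ω`, and let `K ⊆ A*` be the set of functionals normalised at `one` and
non-negative on functions non-negative on `S`.  Then `ψ ∈ K` lies in the Gleason part of
`φ ∈ K` if and only if a two-sided Harnack inequality `c·φ(a) ≤ ψ(a) ≤ C·φ(a)` holds for
all `a` non-negative on `S`, for some constants `C > c > 0`. -/
theorem gleasonPart_iff_harnack {Ω A : Type*} [NormedAddCommGroup A] [NormedSpace ℝ A]
    (δ : A →ₗ[ℝ] (Ω → ℝ)) (one : A) (hone : δ one = fun _ => (1 : ℝ)) (S : Set Ω)
    (K : Set (A →L[ℝ] ℝ))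
    (hK : K = {χ : A →L[ℝ] ℝ | χ one = 1 ∧ ∀ a : A, (∀ s ∈ S, 0 ≤ δ a s) → 0 ≤ χ a})
    (φ ψ : A →L[ℝ] ℝ) (hφ : φ ∈ K) (hψ : ψ ∈ K) :
    gleasonRel K φ ψ ↔
      ∃ c C : ℝ, 0 < c ∧ c < C ∧
        ∀ a : A, (∀ s ∈ S, 0 ≤ δ a s) → c * φ a ≤ ψ a ∧ ψ a ≤ C * φ a :=
  gleasonPart_iff_harnack_general δ one S K hK φ ψ hφ hψ
end

section
/- Let ρ be a Radon probability measure on Ω × Ω with both marginals equal to probability measures μ and ν, and let 𝒢 be a convex cone of Borel measurable functions. Suppose that for all g ∈ 𝒢 and all bounded Borel measurable functions h: Ω → ℝ, ∫ h(ω₁) g(ω₁) dρ(ω₁,ω₂) = ∫ h(ω₁) g(ω₂) dρ(ω₁,ω₂) (all integrals finite). Then for all f that are finite maxima of elements of 𝒢 and all bounded Borel measurable non-negative h, ∫ h(ω₁) f(ω₁) dρ ≤ ∫ h(ω₁) f(ω₂) dρ. -/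
/-!
Let `A_i` be the Borel set of points where `g_i` is the first of the `g_j` to attain the maximum
`f`. On `A_i` we have `f = g_i`, so the identity for `g_i`, tested against `1_{A_i} h`, gives
`∫ 1_{A_i}h(ω₁) f(ω₁) dρ = ∫ 1_{A_i}h(ω₁) g_i(ω₂) dρ ≤ ∫ 1_{A_i}h(ω₁) f(ω₂) dρ`, the inequality
because `h ≥ 0` and `g_i ≤ f`. Summing over `i` gives the claim.
-/

open MeasureTheory

variable {Ω : Type*}

open Set

section Disjointed

variable {α ι : Type*}

theorem measurableSet_disjointed [MeasurableSpace α] [Preorder ι] [LocallyFiniteOrderBot ι]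
    {s : ι → Set α} (hs : ∀ i, MeasurableSet (s i)) (i : ι) :
    MeasurableSet (disjointed s i) := by
  rw [disjointed_eq_inter_compl]
  exact (hs i).inter <| (finite_Iio i).measurableSet_biInter fun j _ => (hs j).compl

theorem sum_indicator_disjointed_of_iUnion_eq_univ {M : Type*} [AddCommMonoid M] [Fintype ι]
    [LinearOrder ι] [LocallyFiniteOrderBot ι] {s : ι → Set α} (hs : ⋃ i, s i = univ)
    (f : α → M) (x : α) : ∑ i, (disjointed s i).indicator f x = f x := by
  rw [← Finset.indicator_biUnion_apply _ _ fun i _ j _ hij => disjoint_disjointed s hij]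
  simp [iUnion_disjointed, hs]

end Disjointed

theorem integrable_finset_sup' {α ι : Type*} [MeasurableSpace α] {μ : Measure α}
    {s : Finset ι} (hs : s.Nonempty) {F : ι → α → ℝ}
    (hF : ∀ i ∈ s, Integrable (F i) μ) : Integrable (fun x => s.sup' hs fun i => F i x) μ := by
  simp only [← Finset.sup'_apply]
  exact Finset.sup'_induction (p := (Integrable · μ)) hs F (fun _ ha _ hb => ha.sup hb) hF

theorem abs_indicator_le_of_abs_le {α : Type*} {h : α → ℝ} {M : ℝ} {s : Set α}
    (hM : ∀ x, |h x| ≤ M) (x : α) : |s.indicator h x| ≤ M :=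
  (norm_indicator_le_norm_self h x).trans (hM x)

section Coupling

variable {α β : Type*} [MeasurableSpace α] [MeasurableSpace β] {ρ : Measure (α × β)}
  {h : α → ℝ} {M : ℝ}

theorem MeasureTheory.Integrable.fst_mul {φ : α × β → ℝ} (hφ : Integrable φ ρ) (hh : Measurable h)
    (hM : ∀ x, |h x| ≤ M) : Integrable (fun q => h q.1 * φ q) ρ :=
  hφ.bdd_mul (hh.comp measurable_fst).aestronglyMeasurable (ae_of_all _ fun q => hM q.1)

theorem integral_fst_mul_eq_sum_disjointed {ι : Type*} [Fintype ι] [LinearOrder ι]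
    [LocallyFiniteOrderBot ι] {s : ι → Set α} (hs : ⋃ i, s i = univ)
    (hsm : ∀ i, MeasurableSet (s i)) (hh : Measurable h) (hM : ∀ x, |h x| ≤ M)
    {φ : α × β → ℝ} (hφ : Integrable φ ρ) :
    ∫ q, h q.1 * φ q ∂ρ = ∑ i, ∫ q, (disjointed s i).indicator h q.1 * φ q ∂ρ := by
  rw [← integral_finsetSum _ fun i _ => hφ.fst_mul
    (hh.indicator (measurableSet_disjointed hsm i)) (abs_indicator_le_of_abs_le hM)]
  simp only [← Finset.sum_mul, sum_indicator_disjointed_of_iUnion_eq_univ hs]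

end Coupling

theorem integral_indicator_fst_mul_le_of_eqOn [MeasurableSpace Ω] {ρ : Measure (Ω × Ω)}
    {g f h : Ω → ℝ} {A : Set Ω} {M : ℝ} (hgf : g ≤ f) (hA : EqOn g f A) (hAm : MeasurableSet A)
    (hmart : ∫ q, A.indicator h q.1 * g q.1 ∂ρ = ∫ q, A.indicator h q.1 * g q.2 ∂ρ)
    (hh : Measurable h) (hM : ∀ x, |h x| ≤ M) (h0 : 0 ≤ h)
    (hg : Integrable (fun q => g q.2) ρ) (hf : Integrable (fun q => f q.2) ρ) :
    ∫ q, A.indicator h q.1 * f q.1 ∂ρ ≤ ∫ q, A.indicator h q.1 * f q.2 ∂ρ := by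
  have hAh := hh.indicator hAm
  have hAM := abs_indicator_le_of_abs_le (s := A) hM
  calc ∫ q, A.indicator h q.1 * f q.1 ∂ρ = ∫ q, A.indicator h q.1 * g q.1 ∂ρ := by
        refine integral_congr_ae (ae_of_all _ fun q => ?_)
        by_cases hq : q.1 ∈ A
        · simp [hq, hA hq]
        · simp [hq]
    _ = ∫ q, A.indicator h q.1 * g q.2 ∂ρ := hmart
    _ ≤ ∫ q, A.indicator h q.1 * f q.2 ∂ρ :=
        integral_mono (hg.fst_mul hAh hAM) (hf.fst_mul hAh hAM) fun q =>
          mul_le_mul_of_nonneg_left (hgf q.2) (indicator_nonneg (fun x _ => h0 x) q.1)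

theorem submartingale_of_martingale_identity_general [MeasurableSpace Ω]
    (ρ : Measure (Ω × Ω))
    (𝒢 : Set (Ω → ℝ)) (hmeas : ∀ g ∈ 𝒢, Measurable g)
    (hint : ∀ g ∈ 𝒢, Integrable (fun q : Ω × Ω => g q.1) ρ ∧
      Integrable (fun q : Ω × Ω => g q.2) ρ)
    (heq : ∀ g ∈ 𝒢, ∀ h : Ω → ℝ, Measurable h → (∃ M, ∀ ω, |h ω| ≤ M) →
      ∫ q, h q.1 * g q.1 ∂ρ = ∫ q, h q.1 * g q.2 ∂ρ) :
    ∀ (n : ℕ) (g : Fin (n + 1) → Ω → ℝ), (∀ i, g i ∈ 𝒢) →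
      ∀ h : Ω → ℝ, Measurable h → (∃ M, ∀ ω, |h ω| ≤ M) → (∀ ω, 0 ≤ h ω) →
        ∫ q, h q.1 * (Finset.univ.sup' Finset.univ_nonempty fun i => g i q.1) ∂ρ ≤
          ∫ q, h q.1 * (Finset.univ.sup' Finset.univ_nonempty fun i => g i q.2) ∂ρ := by
  intro n g hg h hh ⟨M, hM⟩ h0
  set f : Ω → ℝ := fun ω => Finset.univ.sup' Finset.univ_nonempty fun i => g i ω
  set s : Fin (n + 1) → Set Ω := fun i => {ω | g i ω = f ω}
  have hgf : ∀ i, g i ≤ f := fun i ω => Finset.le_sup' (fun i => g i ω) (Finset.mem_univ i)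
  have hs : ⋃ i, s i = univ := eq_univ_of_forall fun ω => by
    obtain ⟨i, -, hi⟩ := Finset.exists_mem_eq_sup' Finset.univ_nonempty fun i => g i ω
    exact mem_iUnion.2 ⟨i, hi.symm⟩
  have hfm : Measurable f := by
    simpa only [f, ← Finset.sup'_apply] using
      Finset.measurable_sup' Finset.univ_nonempty fun i _ => hmeas _ (hg i)
  have hsm : ∀ i, MeasurableSet (s i) := fun i => measurableSet_eq_fun (hmeas _ (hg i)) hfm
  have hf₁ : Integrable (fun q => f q.1) ρ :=
    integrable_finset_sup' Finset.univ_nonempty fun i _ => (hint _ (hg i)).1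
  have hf₂ : Integrable (fun q => f q.2) ρ :=
    integrable_finset_sup' Finset.univ_nonempty fun i _ => (hint _ (hg i)).2
  rw [integral_fst_mul_eq_sum_disjointed hs hsm hh hM hf₁,
    integral_fst_mul_eq_sum_disjointed hs hsm hh hM hf₂]
  refine Finset.sum_le_sum fun i _ => integral_indicator_fst_mul_le_of_eqOn (hgf i)
    (fun ω hω => disjointed_subset s i hω) (measurableSet_disjointed hsm i) ?_ hh hM h0
    (hint _ (hg i)).2 hf₂
  exact heq _ (hg i) _ (hh.indicator (measurableSet_disjointed hsm i))
    ⟨M, abs_indicator_le_of_abs_le hM⟩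

/-- If a coupling `ρ` with marginals `μ, ν` satisfies the martingale-type identity
`∫ h(ω₁) g(ω₁) dρ = ∫ h(ω₁) g(ω₂) dρ` for all generators `g ∈ 𝒢` and all bounded
measurable `h`, then the submartingale inequality holds for all finite maxima of
generators and all bounded measurable non-negative `h`. -/
theorem submartingale_of_martingale_identity [MeasurableSpace Ω]
    (ρ : Measure (Ω × Ω)) [IsProbabilityMeasure ρ]
    (μ ν : Measure Ω) [IsProbabilityMeasure μ] [IsProbabilityMeasure ν]
    (hμ : ρ.map Prod.fst = μ) (hν : ρ.map Prod.snd = ν)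
    (𝒢 : Set (Ω → ℝ)) (hcone : IsConvexConeR 𝒢) (hmeas : ∀ g ∈ 𝒢, Measurable g)
    (hint : ∀ g ∈ 𝒢, Integrable (fun q : Ω × Ω => g q.1) ρ ∧
      Integrable (fun q : Ω × Ω => g q.2) ρ)
    (heq : ∀ g ∈ 𝒢, ∀ h : Ω → ℝ, Measurable h → (∃ M, ∀ ω, |h ω| ≤ M) →
      ∫ q, h q.1 * g q.1 ∂ρ = ∫ q, h q.1 * g q.2 ∂ρ) :
    ∀ (n : ℕ) (g : Fin (n + 1) → Ω → ℝ), (∀ i, g i ∈ 𝒢) →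
      ∀ h : Ω → ℝ, Measurable h → (∃ M, ∀ ω, |h ω| ≤ M) → (∀ ω, 0 ≤ h ω) →
        ∫ q, h q.1 * (Finset.univ.sup' Finset.univ_nonempty fun i => g i q.1) ∂ρ ≤
          ∫ q, h q.1 * (Finset.univ.sup' Finset.univ_nonempty fun i => g i q.2) ∂ρ :=
  submartingale_of_martingale_identity_general ρ 𝒢 hmeas hint heq
end
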